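/- arXiv:2311.10016 — 3 statements merged into one kernel-verified Lean document; each statement's English description precedes it below -/
import Mathlib

section
/- The polynomial p₁(x) = (187x⁵ − 1122x⁴ + 2738x³ − 3438x² + 2250x − 630)² has no root in (0,1); equivalently 187x⁵ − 1122x⁴ + 2738x³ − 3438x² + 2250x − 630 ≠ 0 for all x ∈ (0,1). -/
open Set

theorem quintic_no_root :
    ∀ x ∈ Ioo (0:ℝ) 1,
      (187 * x ^ 5 - 1122 * x ^ 4 + 2738 * x ^ 3 - 3438 * x ^ 2 +
          2250 * x - 630) ^ 2 ≠ 0 ∧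
      187 * x ^ 5 - 1122 * x ^ 4 + 2738 * x ^ 3 - 3438 * x ^ 2 +
          2250 * x - 630 ≠ 0 := by
  intro x ⟨hx0, hx1⟩
  have h : 187 * x ^ 5 - 1122 * x ^ 4 + 2738 * x ^ 3 - 3438 * x ^ 2 +
      2250 * x - 630 < 0 := by
    nlinarith [mul_pos hx0 hx0, mul_pos (mul_pos hx0 hx0) hx0,
      sq_nonneg (1-x), sq_nonneg x, mul_pos hx0 (sub_pos.mpr hx1),
      mul_pos (mul_pos hx0 hx0) (sub_pos.mpr hx1),
      mul_pos (mul_pos (mul_pos hx0 hx0) hx0) (sub_pos.mpr hx1),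
      sq_nonneg (x*(1-x)), sq_nonneg (x^2*(1-x)),
      mul_nonneg (sq_nonneg (x*(1-x))) hx0.le]
  exact ⟨pow_ne_zero _ (ne_of_lt h), ne_of_lt h⟩
end

section
/- Consider the functions I₀(h) and J₀(h) given by I₀(h) = 2∫₀^{x_h⁺} √(h−Ψ₁(x)) dx and J₀(h) = −2∫₀^{x_h⁺} σ₁'(x)√(h−Ψ₁(x)) dx, where Ψ₁(x) = −x² + x on (0,1/2), Ψ₁(x_h⁺) = h, and σ₁'(x) = 2x − 1. If c₀I₀(h) + c₁J₀(h) = 0 for all h ∈ (0, 1/4), then c₀ = c₁ = 0. -/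
/-!
Since `2t - 1` is the derivative of `h - Ψ₁(t)`, `J₀(h) = (4/3) h^{3/2}` in closed form. So if
`c₀ ≠ 0`, then `I₀(h) / h^{3/2}` is constant on `(0, 1/4)`; but at `h = 15/256` and `4h = 15/64`
(where `x_h⁺ = 1/16` and `3/8`) polynomial bounds on `√` give `I₀(4h) > 8 I₀(h)`. Hence `c₀ = 0`,
and then `c₁ = 0` because `J₀ > 0`.
-/

open Set intervalIntegral

theorem strictMonoOn_neg_sq_add_self : StrictMonoOn (fun x : ℝ => -x ^ 2 + x) (Iic (1 / 2)) :=
  fun x hx y hy hxy => by nlinarith [mem_Iic.1 hx, mem_Iic.1 hy]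

theorem integral_deriv_mul_sqrt {f f' : ℝ → ℝ} {a b : ℝ} (hab : a ≤ b)
    (hf : ∀ t, HasDerivAt f (f' t) t) (hf' : Continuous f') (hpos : ∀ t ∈ Ioo a b, 0 < f t) :
    ∫ t in a..b, f' t * √(f t) = 2 / 3 * (√(f b) ^ 3 - √(f a) ^ 3) := by
  have hfc : Continuous f := continuous_iff_continuousAt.2 fun t => (hf t).continuousAt
  have hderiv : ∀ t ∈ Ioo a b, HasDerivAt (fun t => 2 / 3 * √(f t) ^ 3) (f' t * √(f t)) t := by
    intro t ht
    have hft := hpos t ht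
    have hsq : √(f t) ^ 2 = f t := Real.sq_sqrt hft.le
    refine ((((hf t).sqrt hft.ne').pow 3).const_mul (2 / 3)).congr_deriv ?_
    have : √(f t) ≠ 0 := (Real.sqrt_pos.2 hft).ne'
    field_simp
    rw [hsq]
    push_cast
    ring
  rw [integral_eq_sub_of_hasDerivAt_of_le hab (by fun_prop) hderiv
    ((hf'.mul (Real.continuous_sqrt.comp hfc)).intervalIntegrable a b)]
  ring

theorem integral_two_mul_sub_one_mul_sqrt {h x : ℝ} (hx : x ∈ Icc (0 : ℝ) (1 / 2))
    (hroot : -x ^ 2 + x = h) :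
    ∫ t in (0 : ℝ)..x, (2 * t - 1) * √(h - (-(t ^ 2) + t)) = -(2 / 3) * √h ^ 3 := by
  have hpos : ∀ t ∈ Ioo 0 x, 0 < h - (-(t ^ 2) + t) := fun t ht =>
    sub_pos.2 (hroot ▸ strictMonoOn_neg_sq_add_self (mem_Iic.2 (by linarith [ht.2, hx.2]))
      (mem_Iic.2 hx.2) ht.2)
  have hderiv (t : ℝ) : HasDerivAt (fun t => h - (-(t ^ 2) + t)) (2 * t - 1) t := by
    refine ((((hasDerivAt_id' t).pow 2).neg.add (hasDerivAt_id' t)).const_sub h).congr_deriv ?_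
    push_cast
    ring
  rw [integral_deriv_mul_sqrt hx.1 hderiv (by fun_prop) hpos]
  simp [hroot]

/-- The tangent line of `√` at `u = 1/36`. -/
theorem sqrt_le_three_mul_add {u : ℝ} (hu : 0 ≤ u) : √u ≤ 3 * u + 1 / 12 := by
  nlinarith [sq_nonneg (√u - 1 / 6), Real.sq_sqrt hu]

/-- A parabola touching `√` at `u = 9/64`: with `s = √u`, the difference is
`s (256/27) (s - 3/8)² (s + 3/4)`. -/
theorem four_mul_sub_le_sqrt {u : ℝ} (hu : 0 ≤ u) : 4 * u - 256 / 27 * u ^ 2 ≤ √u := by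
  nlinarith [Real.sq_sqrt hu, Real.sqrt_nonneg u,
    mul_nonneg (mul_nonneg (Real.sqrt_nonneg u) (sq_nonneg (√u - 3 / 8)))
      (by positivity : (0 : ℝ) ≤ √u + 3 / 4)]

theorem integral_sqrt_le_at_15_div_256 :
    ∫ t in (0 : ℝ)..(1 / 16), √(15 / 256 - (-(t ^ 2) + t)) ≤ 65 / 6144 := by
  calc ∫ t in (0 : ℝ)..(1 / 16), √(15 / 256 - (-(t ^ 2) + t))
      ≤ ∫ t in (0 : ℝ)..(1 / 16), (3 * (15 / 256 - (-(t ^ 2) + t)) + 1 / 12) := by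
        refine integral_mono_on (by norm_num) (Continuous.intervalIntegrable (by fun_prop) _ _)
          (Continuous.intervalIntegrable (by fun_prop) _ _) fun t ht => ?_
        exact sqrt_le_three_mul_add (by nlinarith [ht.1, ht.2])
    _ = 65 / 6144 := by
        simp (disch := first | (apply Continuous.intervalIntegrable; fun_prop) | norm_num) only
          [integral_add, integral_sub, integral_const_mul, integral_pow, integral_const,
            integral_neg, mul_sub, mul_add, mul_neg, smul_eq_mul]
        rw [integral_const_mul, integral_id]
        norm_num

theorem le_integral_sqrt_at_15_div_64 :
    89 / 960 ≤ ∫ t in (0 : ℝ)..(3 / 8), √(15 / 64 - (-(t ^ 2) + t)) := by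
  calc (89 / 960 : ℝ)
      = ∫ t in (0 : ℝ)..(3 / 8), (5 / 12 + 4 / 9 * t - 268 / 27 * t ^ 2 + 512 / 27 * t ^ 3
          - 256 / 27 * t ^ 4) := by
        simp (disch := first | (apply Continuous.intervalIntegrable; fun_prop) | norm_num) only
          [integral_add, integral_sub, integral_const_mul, integral_pow, integral_const,
            smul_eq_mul]
        rw [integral_const_mul, integral_id]
        norm_num
    _ ≤ ∫ t in (0 : ℝ)..(3 / 8), √(15 / 64 - (-(t ^ 2) + t)) := by
        refine integral_mono_on (by norm_num) (Continuous.intervalIntegrable (by fun_prop) _ _)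
          (Continuous.intervalIntegrable (by fun_prop) _ _) fun t ht => ?_
        convert four_mul_sub_le_sqrt (u := 15 / 64 - (-(t ^ 2) + t)) (by nlinarith [ht.1, ht.2])
          using 1
        ring

theorem linear_independence_I0_J0
    (xh : ℝ → ℝ)
    (hxh : ∀ h ∈ Ioo (0:ℝ) (1/4), xh h ∈ Ioo (0:ℝ) (1/2) ∧ -(xh h) ^ 2 + xh h = h)
    (c₀ c₁ : ℝ)
    (hzero : ∀ h ∈ Ioo (0:ℝ) (1/4),
      c₀ * (2 * ∫ x in (0:ℝ)..xh h, Real.sqrt (h - (-(x ^ 2) + x))) +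
      c₁ * (-2 * ∫ x in (0:ℝ)..xh h,
          (2 * x - 1) * Real.sqrt (h - (-(x ^ 2) + x))) = 0) :
    c₀ = 0 ∧ c₁ = 0 := by
  have root_eq {h x : ℝ} (hh : h ∈ Ioo (0 : ℝ) (1 / 4)) (hx : x ≤ 1 / 2)
      (hroot : -x ^ 2 + x = h) : xh h = x :=
    strictMonoOn_neg_sq_add_self.injOn (hxh h hh).1.2.le hx ((hxh h hh).2.trans hroot.symm)
  have sqrt_15_div_64 : √(15 / 64 : ℝ) = 2 * √(15 / 256) := by
    rw [show (15 / 64 : ℝ) = 2 ^ 2 * (15 / 256) by norm_num, Real.sqrt_mul' _ (by norm_num),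
      Real.sqrt_sq (by norm_num)]
  have E₁ := hzero (15 / 256) (by norm_num)
  have E₂ := hzero (15 / 64) (by norm_num)
  rw [root_eq (by norm_num) (by norm_num) (by norm_num : -(1 / 16 : ℝ) ^ 2 + 1 / 16 = 15 / 256),
    integral_two_mul_sub_one_mul_sqrt (by norm_num) (by norm_num)] at E₁
  rw [root_eq (by norm_num) (by norm_num) (by norm_num : -(3 / 8 : ℝ) ^ 2 + 3 / 8 = 15 / 64),
    integral_two_mul_sub_one_mul_sqrt (by norm_num) (by norm_num), sqrt_15_div_64] at E₂
  set I₁ := ∫ t in (0 : ℝ)..(1 / 16), √(15 / 256 - (-(t ^ 2) + t))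
  set I₂ := ∫ t in (0 : ℝ)..(3 / 8), √(15 / 64 - (-(t ^ 2) + t))
  have hI : 8 * I₁ < I₂ := by
    linarith [integral_sqrt_le_at_15_div_256, le_integral_sqrt_at_15_div_64]
  have hc₀ : c₀ = 0 := by
    refine (mul_eq_zero.1 (?_ : c₀ * (I₂ - 8 * I₁) = 0)).resolve_right (by linarith)
    linear_combination (1 / 2) * E₂ - 4 * E₁
  refine ⟨hc₀, (mul_eq_zero.1 (?_ : c₁ * √(15 / 256 : ℝ) ^ 3 = 0)).resolve_right (by positivity)⟩
  linear_combination (3 / 4) * E₁ - (3 / 2) * I₁ * hc₀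
end

section
/- Let p(x,z) = (c₀ + c₂x)·2z − (c₁ + c₃z)·(x − x²) and q(x,z) = −2x³ + 3x² − 6z². If the resultant of p and q with respect to z vanishes identically as a polynomial in x on (0,1), then c₀ = c₁ = c₂ = c₃ = 0. -/
open Set Polynomial

lemma poly_coeffs_zero (a2 a3 a4 a5 a6 a7 : ℝ)
    (h : ∀ x ∈ Ioo (0:ℝ) 1,
      a2*x^2 + a3*x^3 + a4*x^4 + a5*x^5 + a6*x^6 + a7*x^7 = 0) :
    a2 = 0 ∧ a3 = 0 ∧ a4 = 0 ∧ a5 = 0 ∧ a6 = 0 ∧ a7 = 0 := by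
  set P : ℝ[X] := C a2 * X^2 + C a3 * X^3 + C a4 * X^4 + C a5 * X^5
      + C a6 * X^6 + C a7 * X^7 with hP
  have hroot : Set.Ioo (0:ℝ) 1 ⊆ {x | P.IsRoot x} := by
    intro x hx
    have := h x hx
    simp only [IsRoot, hP, eval_add, eval_mul, eval_pow, eval_C, eval_X, Set.mem_setOf_eq]
    linarith [this]
  have hPz : P = 0 :=
    P.eq_zero_of_infinite_isRoot ((Set.Ioo_infinite (by norm_num)).mono hroot)
  have hc : ∀ n, P.coeff n = 0 := by
    intro n; rw [hPz]; simp
  have h2 := hc 2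
  have h3 := hc 3
  have h4 := hc 4
  have h5 := hc 5
  have h6 := hc 6
  have h7 := hc 7
  simp [hP, coeff_X_pow] at h2 h3 h4 h5 h6 h7
  exact ⟨h2, h3, h4, h5, h6, h7⟩

theorem resultant_vanishing_implies_zero
    (c₀ c₁ c₂ c₃ : ℝ)
    (hres : ∀ x ∈ Ioo (0:ℝ) 1,
      (12 * c₀ ^ 2 - 6 * c₁ ^ 2) * x ^ 2 +
      (-8 * c₀ ^ 2 + 24 * c₀ * c₂ - 12 * c₀ * c₃ + 12 * c₁ ^ 2) * x ^ 3 +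
      (-16 * c₀ * c₂ + 20 * c₀ * c₃ - 6 * c₁ ^ 2 + 12 * c₂ ^ 2 -
          12 * c₂ * c₃ + 3 * c₃ ^ 2) * x ^ 4 +
      (-8 * c₀ * c₃ - 8 * c₂ ^ 2 + 20 * c₂ * c₃ - 8 * c₃ ^ 2) * x ^ 5 +
      (-8 * c₂ * c₃ + 7 * c₃ ^ 2) * x ^ 6 - 2 * c₃ ^ 2 * x ^ 7 = 0) :
    c₀ = 0 ∧ c₁ = 0 ∧ c₂ = 0 ∧ c₃ = 0 := by
  obtain ⟨h2, h3, h4, h5, h6, h7⟩ :=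
    poly_coeffs_zero (12 * c₀ ^ 2 - 6 * c₁ ^ 2)
      (-8 * c₀ ^ 2 + 24 * c₀ * c₂ - 12 * c₀ * c₃ + 12 * c₁ ^ 2)
      (-16 * c₀ * c₂ + 20 * c₀ * c₃ - 6 * c₁ ^ 2 + 12 * c₂ ^ 2 - 12 * c₂ * c₃ + 3 * c₃ ^ 2)
      (-8 * c₀ * c₃ - 8 * c₂ ^ 2 + 20 * c₂ * c₃ - 8 * c₃ ^ 2)
      (-8 * c₂ * c₃ + 7 * c₃ ^ 2) (-2 * c₃ ^ 2)
      (fun x hx => by linarith [hres x hx])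
  have hc3 : c₃ = 0 := by nlinarith [sq_nonneg c₃]
  subst hc3
  have hc2 : c₂ = 0 := by nlinarith [sq_nonneg c₂]
  subst hc2
  have hc1 : c₁ = 0 := by nlinarith [sq_nonneg c₁]
  subst hc1
  have hc0 : c₀ = 0 := by nlinarith [sq_nonneg c₀]
  exact ⟨hc0, rfl, rfl, rfl⟩
end
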